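/- Let s be a Nash equilibrium of the sum classic network creation game with n players and parameter α > 0, with graph G = G[s], and let u, v ∈ V(G) with d_G(u,v) ≥ 2. Then the number of nodes z such that every shortest path in G from z to u passes through v is at most α/(d_G(u,v) − 1). -/

import Mathlib

open SimpleGraph Finset
open scoped Classical

/-! ### The sum classic network creation game -/

/-- The communication network `G[s]` of a strategy profile `s`:
an undirected graph on the players with an edge between `u` and `v`
iff `v ∈ s u` or `u ∈ s v`. -/
def commGraph (n : ℕ) (s : Fin n → Finset (Fin n)) : SimpleGraph (Fin n) :=
  SimpleGraph.fromRel (fun u v => v ∈ s u)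

/-- A strategy profile is valid if no player buys a link to itself,
i.e. `s u ⊆ V ∖ {u}`. -/
def ValidProfile (n : ℕ) (s : Fin n → Finset (Fin n)) : Prop := ∀ u, u ∉ s u

/-- The (finite part of the) cost of player `u`:
`α·|s_u|` plus the sum of the distances from `u` to all other players. -/
noncomputable def gameCost (n : ℕ) (α : ℝ) (s : Fin n → Finset (Fin n)) (u : Fin n) : ℝ :=
  α * (s u).card + ∑ v, ((commGraph n s).dist u v : ℝ)

/-- The cost of player `u`, with value `⊤` when the communication network
is disconnected. -/
noncomputable def gameCostE (n : ℕ) (α : ℝ) (s : Fin n → Finset (Fin n)) (u : Fin n) : EReal :=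
  if (commGraph n s).Connected then ((gameCost n α s u : ℝ) : EReal) else ⊤

/-- Nash equilibrium of the sum classic network creation game: the communication
network is connected and no unilateral deviation strictly decreases the deviator's
cost (a deviation yielding a disconnected network has cost `+∞`, hence is never
an improvement and can be ignored). -/
def IsNE (n : ℕ) (α : ℝ) (s : Fin n → Finset (Fin n)) : Prop :=
  ValidProfile n s ∧ (commGraph n s).Connected ∧
    ∀ (u : Fin n) (t : Finset (Fin n)), u ∉ t →
      (commGraph n (Function.update s u t)).Connected →
      gameCost n α s u ≤ gameCost n α (Function.update s u t) u

/-- Buying Nash equilibrium: no player can strictly decrease its cost by only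
buying additional links (the deviated network is automatically connected). -/
def IsBuyingNE (n : ℕ) (α : ℝ) (s : Fin n → Finset (Fin n)) : Prop :=
  ValidProfile n s ∧ (commGraph n s).Connected ∧
    ∀ (u : Fin n) (t : Finset (Fin n)), u ∉ t → s u ⊆ t →
      gameCost n α s u ≤ gameCost n α (Function.update s u t) u

/-! ### Biconnected components -/

/-- A graph is biconnected if it is connected and removing any single vertex
keeps it connected (no cut vertex). -/
def Biconnected {V : Type*} (G : SimpleGraph V) : Prop :=
  G.Connected ∧ ∀ v : V, (G.induce {w | w ≠ v}).Connected

/-- `S` is the vertex set of a biconnected component of `G`: it induces a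
biconnected subgraph and is maximal with this property. -/
def IsBiconnectedComponent {V : Type*} (G : SimpleGraph V) (S : Set V) : Prop :=
  Biconnected (G.induce S) ∧ ∀ T : Set V, S ⊆ T → Biconnected (G.induce T) → T = S

/-- `deg_H^+(v)`: the number of links of the subgraph induced by `S` that are
bought by `v`. -/
noncomputable def degHplus (n : ℕ) (s : Fin n → Finset (Fin n)) (S : Set (Fin n))
    (v : Fin n) : ℕ :=
  ((↑(s v) : Set (Fin n)) ∩ S).ncard

/-! ### A sets -/

/-- `z` belongs to the `A` set `A^u_{e_1,…,e_k}(v)` where the bought edges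
`e_i = v vᵢ` have endpoints `vs`: every shortest path in `G` from `z` to `u`
passes through `v`, and the predecessor of `v` on any such path lies in `vs`. -/
def InAset {V : Type*} (G : SimpleGraph V) (u v : V) (vs : Set V) (z : V) : Prop :=
  ∀ p : G.Walk z u, p.length = G.dist z u →
    ∃ i, 0 < i ∧ i ≤ p.length ∧ p.getVert i = v ∧ p.getVert (i - 1) ∈ vs

/-- `z` belongs to the set `A^{j,u}_{e_1,…,e_k}(v)`: it belongs to
`A^u_{e_1,…,e_k}(v)` and admits a shortest path to `u` through `v` whose
predecessor of `v` is `vj`. -/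
def InAjset {V : Type*} (G : SimpleGraph V) (u v vj : V) (vs : Set V) (z : V) : Prop :=
  InAset G u v vs z ∧ ∃ p : G.Walk z u, p.length = G.dist z u ∧
    ∃ i, 0 < i ∧ i ≤ p.length ∧ p.getVert i = v ∧ p.getVert (i - 1) = vj

/-! ### Auxiliary graphs -/

/-- The `k`-th power of a graph: distinct `u`, `v` are adjacent iff their
distance in `G` is at most `k`. -/
def powerGraph {V : Type*} (G : SimpleGraph V) (k : ℕ) : SimpleGraph V where
  Adj u v := u ≠ v ∧ G.dist u v ≤ k
  symm := ⟨fun u v h => ⟨h.1.symm, by rw [SimpleGraph.dist_comm]; exact h.2⟩⟩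
  loopless := ⟨fun u h => h.1 rfl⟩

/-- A graph on `n` vertices is `ε`-distance-almost-uniform iff there is a
distance index `r` such that every vertex has at least `n(1−ε)` vertices at
distance exactly `r` or at distance exactly `r+1`. -/
def DistanceAlmostUniform {V : Type*} (G : SimpleGraph V) (n : ℕ) (ε : ℝ) : Prop :=
  ∃ r : ℕ, ∀ u : V, (n : ℝ) * (1 - ε) ≤
    max ({z | G.dist u z = r}.ncard : ℝ) ({z | G.dist u z = r + 1}.ncard : ℝ)

/-- The crossing graph `Z` of a family of vertex sets `A i`: `i ≠ j` are
adjacent iff some edge of `G` joins `A i` and `A j`. -/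
def crossGraph {V : Type*} {l : ℕ} (G : SimpleGraph V) (A : Fin l → Set V) :
    SimpleGraph (Fin l) :=
  SimpleGraph.fromRel (fun i j => ∃ x y, G.Adj x y ∧ x ∈ A i ∧ y ∈ A j)

/-- The maximum diameter of a connected component of `Z`. -/
noncomputable def maxCompDiam {V : Type*} (Z : SimpleGraph V) : ℕ :=
  sSup {d | ∃ i j, Z.Reachable i j ∧ Z.dist i j = d}

/-! If `u` additionally buys the link `uv`, every node `z` all of whose shortest paths to `u`
pass through `v` gets closer to `u` by at least `d(u,v) - 1`, since
`d(u,z) = d(z,v) + d(v,u)` before and `d(u,z) ≤ 1 + d(v,z)` after. Distances never grow when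
an edge is added, so `u` saves at least `d(u,v) - 1` for each such `z`; in equilibrium the total
saving is at most the price `α` of the link. -/

namespace SimpleGraph

variable {V : Type*} {G G' : SimpleGraph V} {u v z : V}

lemma Walk.dist_add_dist_le_length (p : G.Walk z u) (hv : v ∈ p.support) :
    G.dist z v + G.dist v u ≤ p.length :=
  calc G.dist z v + G.dist v u ≤ (p.takeUntil v hv).length + (p.dropUntil v hv).length :=
        add_le_add (G.dist_le _) (G.dist_le _)
    _ = p.length := by rw [← Walk.length_append, p.take_spec hv]

lemma dist_le_dist_add_one_of_le_of_adj (hle : G ≤ G') (hadj : G'.Adj u v)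
    (h : G.Reachable v z) : G'.dist u z ≤ G.dist v z + 1 := by
  obtain ⟨p, hp⟩ := h.exists_walk_length_eq_dist
  simpa [hp, add_comm] using G'.dist_le (Walk.cons hadj (p.mapLe hle))

lemma Connected.dist_add_dist_le_of_forall_shortest_mem_support (hG : G.Connected)
    (hle : G ≤ G') (hadj : G'.Adj u v)
    (hz : ∀ p : G.Walk z u, p.length = G.dist z u → v ∈ p.support) :
    G'.dist u z + G.dist u v ≤ G.dist u z + 1 := by
  obtain ⟨p, hp⟩ := hG.exists_walk_length_eq_dist z u
  have hsplit := p.dist_add_dist_le_length (hz p hp)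
  have hnew := dist_le_dist_add_one_of_le_of_adj hle hadj (hG.preconnected v z)
  rw [G.dist_comm (u := z) (v := v), G.dist_comm (u := v) (v := u)] at hsplit
  rw [G.dist_comm (u := u) (v := z)]
  omega

end SimpleGraph

section NetworkCreation

variable {n : ℕ} {s : Fin n → Finset (Fin n)} {u v : Fin n}

lemma commGraph_adj_of_mem (huv : u ≠ v) (h : v ∈ s u) : (commGraph n s).Adj u v := by
  rw [commGraph, fromRel_adj]
  exact ⟨huv, Or.inl h⟩

lemma commGraph_mono {s' : Fin n → Finset (Fin n)} (h : ∀ w, s w ⊆ s' w) :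
    commGraph n s ≤ commGraph n s' := by
  intro a b hab
  rw [commGraph, fromRel_adj] at hab ⊢
  exact ⟨hab.1, hab.2.imp (fun h' => h _ h') (fun h' => h _ h')⟩

lemma commGraph_le_update_insert :
    commGraph n s ≤ commGraph n (Function.update s u (insert v (s u))) := by
  refine commGraph_mono fun w => ?_
  rcases eq_or_ne w u with rfl | hw
  · simp
  · simp [Function.update_of_ne hw]

lemma IsNE.sum_dist_le_add_sum_dist_update_insert {α : ℝ} (hs : IsNE n α s) (huv : u ≠ v)
    (hv : v ∉ s u) :
    ∑ z, ((commGraph n s).dist u z : ℝ) ≤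
      α + ∑ z, ((commGraph n (Function.update s u (insert v (s u)))).dist u z : ℝ) := by
  obtain ⟨hval, hconn, hNE⟩ := hs
  have hut : u ∉ insert v (s u) := by
    rw [mem_insert, not_or]
    exact ⟨huv, hval u⟩
  have hcost := hNE u _ hut (hconn.mono commGraph_le_update_insert)
  simp only [gameCost, Function.update_self, card_insert_of_notMem hv, Nat.cast_succ] at hcost
  linarith

end NetworkCreation

theorem stmt_19_general (n : ℕ) (α : ℝ)
    (s : Fin n → Finset (Fin n)) (hs : IsNE n α s)
    (u v : Fin n) (hd : 2 ≤ (commGraph n s).dist u v) :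
    ({z : Fin n | ∀ p : (commGraph n s).Walk z u,
        p.length = (commGraph n s).dist z u → v ∈ p.support}.ncard : ℝ) ≤
      α / (((commGraph n s).dist u v : ℝ) - 1) := by
  set G := commGraph n s
  set G' := commGraph n (Function.update s u (insert v (s u)))
  set B := {z : Fin n | ∀ p : G.Walk z u, p.length = G.dist z u → v ∈ p.support}
  have huv : u ≠ v := by rintro rfl; simp at hd
  have hv : v ∉ s u := fun h => by
    simp [G, (dist_eq_one_iff_adj).mpr (commGraph_adj_of_mem huv h)] at hd
  have hle : G ≤ G' := commGraph_le_update_insert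
  have hadj : G'.Adj u v := commGraph_adj_of_mem huv (by simp)
  have hsaving : ∀ z ∈ B.toFinset, (G.dist u v : ℝ) - 1 ≤ G.dist u z - G'.dist u z := by
    intro z hz
    have := hs.2.1.dist_add_dist_le_of_forall_shortest_mem_support hle hadj (Set.mem_toFinset.1 hz)
    have : ((G'.dist u z + G.dist u v : ℕ) : ℝ) ≤ (G.dist u z + 1 : ℕ) := by exact_mod_cast this
    push_cast at this
    linarith
  have hnonneg : ∀ z, (0 : ℝ) ≤ G.dist u z - G'.dist u z := fun z => by
    simpa using ((hs.2.1.preconnected u z).dist_anti hle)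
  have hd1 : (0 : ℝ) < (G.dist u v : ℝ) - 1 := by
    have : (2 : ℝ) ≤ G.dist u v := by exact_mod_cast hd
    linarith
  rw [Set.ncard_eq_toFinset_card', le_div_iff₀ hd1]
  calc (B.toFinset.card : ℝ) * ((G.dist u v : ℝ) - 1)
      ≤ ∑ z ∈ B.toFinset, ((G.dist u z : ℝ) - G'.dist u z) := by
        simpa using card_nsmul_le_sum _ _ _ hsaving
    _ ≤ ∑ z, ((G.dist u z : ℝ) - G'.dist u z) :=
        sum_le_sum_of_subset_of_nonneg (subset_univ _) fun z _ _ => hnonneg z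
    _ ≤ α := by
        rw [sum_sub_distrib]
        linarith [hs.sum_dist_le_add_sum_dist_update_insert huv hv]

/-- For any NE graph `G` and nodes `u`, `v` with
`d_G(u,v) ≥ 2`, the number of nodes `z` such that every shortest path from `z`
to `u` passes through `v` is at most `α/(d_G(u,v) − 1)`. -/
theorem stmt_19 (n : ℕ) (α : ℝ) (hα : 0 < α)
    (s : Fin n → Finset (Fin n)) (hs : IsNE n α s)
    (u v : Fin n) (hd : 2 ≤ (commGraph n s).dist u v) :
    ({z : Fin n | ∀ p : (commGraph n s).Walk z u,
        p.length = (commGraph n s).dist z u → v ∈ p.support}.ncard : ℝ) ≤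
      α / (((commGraph n s).dist u v : ℝ) - 1) :=
  stmt_19_general n α s hs u v hd
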